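/- The kernel h(X₁,X₂,Y₁,Y₂) = (1/4)[4 min(X₁,X₂) + 4 min(Y₁,Y₂) − 2 min(X₁,Y₁) − 2 min(X₁,Y₂) − 2 min(X₂,Y₁) − 2 min(X₂,Y₂)] is an unbiased kernel for D: E[h(X₁,X₂,Y₁,Y₂)] = ∫₀^∞ (F̄(x) − Ḡ(x))² dx, where X₁, X₂ are i.i.d. with survival function F̄, Y₁, Y₂ are i.i.d. with survival function Ḡ, and all are independent. -/

import Mathlib

open MeasureTheory ProbabilityTheory Set

section Aux

variable {Ω : Type*} [MeasureSpace Ω] [IsProbabilityMeasure (ℙ : Measure Ω)]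

lemma surv_measurable' (f : Ω → ℝ) :
    Measurable (fun t : ℝ => (ℙ {a | t < f a}).toReal) := by
  refine Measurable.ennreal_toReal ?_
  exact Antitone.measurable (fun _ _ hst ↦ measure_mono (fun _ h ↦ lt_of_le_of_lt hst h))

/-- Integrability of the survival function. -/
lemma surv_integrable' {f : Ω → ℝ} (hnn : 0 ≤ᵐ[ℙ] f) (hint : Integrable f ℙ) :
    IntegrableOn (fun t => (ℙ {a | t < f a}).toReal) (Ioi (0:ℝ)) := by
  refine ⟨(surv_measurable' f).aestronglyMeasurable, ?_⟩
  have key := lintegral_eq_lintegral_meas_lt ℙ hnn hint.aemeasurable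
  have fin : ∫⁻ t in Ioi (0:ℝ), ℙ {a | t < f a} < ⊤ := by
    rw [← key]; exact hint.lintegral_lt_top
  refine lt_of_le_of_lt ?_ fin
  refine lintegral_mono fun t => ?_
  simp only [Real.enorm_eq_ofReal ENNReal.toReal_nonneg]
  exact ENNReal.ofReal_toReal_le

lemma min_integrable' {A B : Ω → ℝ} (hA : Measurable A) (hB : Measurable B)
    (hAnn : 0 ≤ᵐ[ℙ] A) (hBnn : 0 ≤ᵐ[ℙ] B) (hAint : Integrable A ℙ) :
    Integrable (fun ω => min (A ω) (B ω)) ℙ := by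
  refine hAint.mono ((hA.min hB).aestronglyMeasurable) ?_
  filter_upwards [hAnn, hBnn] with ω hAω hBω
  simp only [Real.norm_eq_abs, abs_of_nonneg (le_min hAω hBω), abs_of_nonneg hAω]
  exact min_le_left _ _

lemma exp_min_eq' {A B : Ω → ℝ} (hA : Measurable A) (hB : Measurable B)
    (hAnn : 0 ≤ᵐ[ℙ] A) (hBnn : 0 ≤ᵐ[ℙ] B) (hAint : Integrable A ℙ)
    (hindep : IndepFun A B ℙ) :
    ∫ ω, min (A ω) (B ω) = ∫ t in Ioi (0:ℝ),
      (ℙ {ω | t < A ω}).toReal * (ℙ {ω | t < B ω}).toReal := by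
  have hmin : Integrable (fun ω => min (A ω) (B ω)) ℙ := min_integrable' hA hB hAnn hBnn hAint
  have hminnn : 0 ≤ᵐ[ℙ] fun ω => min (A ω) (B ω) := by
    filter_upwards [hAnn, hBnn] with ω h1 h2; exact le_min h1 h2
  rw [hmin.integral_eq_integral_meas_lt hminnn]
  refine setIntegral_congr_fun measurableSet_Ioi fun t _ => ?_
  have hset : {a | t < min (A a) (B a)} = A ⁻¹' (Ioi t) ∩ B ⁻¹' (Ioi t) := by
    ext a; simp [lt_min_iff]
  rw [hset, measureReal_def, hindep.measure_inter_preimage_eq_mul _ _ measurableSet_Ioi measurableSet_Ioi,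
    ENNReal.toReal_mul]
  rfl

end Aux

/-- The U-statistic kernel
`h = (1/4)[4 min(X₁,X₂) + 4 min(Y₁,Y₂) − 2 min(X₁,Y₁) − 2 min(X₁,Y₂)
  − 2 min(X₂,Y₁) − 2 min(X₂,Y₂)]` is unbiased for
`D = ∫₀^∞ (F̄ − Ḡ)² dx`. -/
theorem kernel_unbiased_for_divergence
    {Ω : Type*} [MeasureSpace Ω] [IsProbabilityMeasure (ℙ : Measure Ω)]
    (X₁ X₂ Y₁ Y₂ : Ω → ℝ)
    (hX₁ : Measurable X₁) (hX₂ : Measurable X₂)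
    (hY₁ : Measurable Y₁) (hY₂ : Measurable Y₂)
    (hXpos : ∀ ω, 0 ≤ X₁ ω) (hYpos : ∀ ω, 0 ≤ Y₁ ω)
    (hidX : Measure.map X₁ ℙ = Measure.map X₂ ℙ)
    (hidY : Measure.map Y₁ ℙ = Measure.map Y₂ ℙ)
    (hindep : iIndepFun ![X₁, X₂, Y₁, Y₂] ℙ)
    (hXint : Integrable X₁ ℙ) (hYint : Integrable Y₁ ℙ) :
    (∫ ω, (1 / 4 : ℝ) *
        (4 * min (X₁ ω) (X₂ ω) + 4 * min (Y₁ ω) (Y₂ ω)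
          - 2 * min (X₁ ω) (Y₁ ω) - 2 * min (X₁ ω) (Y₂ ω)
          - 2 * min (X₂ ω) (Y₁ ω) - 2 * min (X₂ ω) (Y₂ ω)))
      = ∫ x in Ioi (0 : ℝ),
          ((ℙ {ω | x < X₁ ω}).toReal - (ℙ {ω | x < Y₁ ω}).toReal) ^ 2 := by
  -- notation for the survival functions
  set F : ℝ → ℝ := fun t => (ℙ {ω | t < X₁ ω}).toReal with hF
  set G : ℝ → ℝ := fun t => (ℙ {ω | t < Y₁ ω}).toReal with hG
  -- basic a.e. nonnegativity facts
  have hX₁nn : 0 ≤ᵐ[ℙ] X₁ := Filter.Eventually.of_forall hXpos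
  have hY₁nn : 0 ≤ᵐ[ℙ] Y₁ := Filter.Eventually.of_forall hYpos
  have hX₂nn : 0 ≤ᵐ[ℙ] X₂ := by
    rw [Filter.EventuallyLE, ae_iff]
    simp only [Pi.zero_apply, not_le]
    show ℙ (X₂ ⁻¹' (Iio 0)) = 0
    rw [← Measure.map_apply hX₂ measurableSet_Iio, ← hidX,
      Measure.map_apply hX₁ measurableSet_Iio]
    have : X₁ ⁻¹' (Iio 0) = ∅ := by
      ext ω; simp [not_lt.mpr (hXpos ω)]
    simp [this]
  have hY₂nn : 0 ≤ᵐ[ℙ] Y₂ := by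
    rw [Filter.EventuallyLE, ae_iff]
    simp only [Pi.zero_apply, not_le]
    show ℙ (Y₂ ⁻¹' (Iio 0)) = 0
    rw [← Measure.map_apply hY₂ measurableSet_Iio, ← hidY,
      Measure.map_apply hY₁ measurableSet_Iio]
    have : Y₁ ⁻¹' (Iio 0) = ∅ := by
      ext ω; simp [not_lt.mpr (hYpos ω)]
    simp [this]
  -- same survival functions for the copies
  have hsurvX : ∀ t : ℝ, ℙ {ω | t < X₂ ω} = ℙ {ω | t < X₁ ω} := by
    intro t
    have h2 : {ω | t < X₂ ω} = X₂ ⁻¹' (Ioi t) := rfl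
    have h1 : {ω | t < X₁ ω} = X₁ ⁻¹' (Ioi t) := rfl
    rw [h1, h2, ← Measure.map_apply hX₂ measurableSet_Ioi, ← hidX,
      Measure.map_apply hX₁ measurableSet_Ioi]
  have hsurvY : ∀ t : ℝ, ℙ {ω | t < Y₂ ω} = ℙ {ω | t < Y₁ ω} := by
    intro t
    have h2 : {ω | t < Y₂ ω} = Y₂ ⁻¹' (Ioi t) := rfl
    have h1 : {ω | t < Y₁ ω} = Y₁ ⁻¹' (Ioi t) := rfl
    rw [h1, h2, ← Measure.map_apply hY₂ measurableSet_Ioi, ← hidY,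
      Measure.map_apply hY₁ measurableSet_Ioi]
  -- pairwise independence
  have ind : ∀ i j : Fin 4, i ≠ j →
      IndepFun (![X₁, X₂, Y₁, Y₂] i) (![X₁, X₂, Y₁, Y₂] j) ℙ := by
    intro i j hij
    exact hindep.indepFun hij
  have i01 : IndepFun X₁ X₂ ℙ := by simpa using ind 0 1 (by decide)
  have i23 : IndepFun Y₁ Y₂ ℙ := by simpa using ind 2 3 (by decide)
  have i02 : IndepFun X₁ Y₁ ℙ := by simpa using ind 0 2 (by decide)
  have i03 : IndepFun X₁ Y₂ ℙ := by simpa using ind 0 3 (by decide)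
  have i12 : IndepFun X₂ Y₁ ℙ := by simpa using ind 1 2 (by decide)
  have i13 : IndepFun X₂ Y₂ ℙ := by simpa using ind 1 3 (by decide)
  -- integrability of the copies
  have hX₂int : Integrable X₂ ℙ := by
    have : Integrable id (Measure.map X₂ ℙ) := by
      rw [← hidX]
      rwa [integrable_map_measure aestronglyMeasurable_id hX₁.aemeasurable]
    rwa [integrable_map_measure aestronglyMeasurable_id hX₂.aemeasurable] at this
  have hY₂int : Integrable Y₂ ℙ := by
    have : Integrable id (Measure.map Y₂ ℙ) := by
      rw [← hidY]
      rwa [integrable_map_measure aestronglyMeasurable_id hY₁.aemeasurable]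
    rwa [integrable_map_measure aestronglyMeasurable_id hY₂.aemeasurable] at this
  -- the six expectations of minima
  have e1 : ∫ ω, min (X₁ ω) (X₂ ω) = ∫ t in Ioi (0:ℝ), F t * F t := by
    rw [exp_min_eq' hX₁ hX₂ hX₁nn hX₂nn hXint i01]
    refine setIntegral_congr_fun measurableSet_Ioi fun t _ => ?_
    simp [hF, hsurvX t]
  have e2 : ∫ ω, min (Y₁ ω) (Y₂ ω) = ∫ t in Ioi (0:ℝ), G t * G t := by
    rw [exp_min_eq' hY₁ hY₂ hY₁nn hY₂nn hYint i23]
    refine setIntegral_congr_fun measurableSet_Ioi fun t _ => ?_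
    simp [hG, hsurvY t]
  have e3 : ∫ ω, min (X₁ ω) (Y₁ ω) = ∫ t in Ioi (0:ℝ), F t * G t :=
    exp_min_eq' hX₁ hY₁ hX₁nn hY₁nn hXint i02
  have e4 : ∫ ω, min (X₁ ω) (Y₂ ω) = ∫ t in Ioi (0:ℝ), F t * G t := by
    rw [exp_min_eq' hX₁ hY₂ hX₁nn hY₂nn hXint i03]
    refine setIntegral_congr_fun measurableSet_Ioi fun t _ => ?_
    simp [hF, hG, hsurvY t]
  have e5 : ∫ ω, min (X₂ ω) (Y₁ ω) = ∫ t in Ioi (0:ℝ), F t * G t := by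
    rw [exp_min_eq' hX₂ hY₁ hX₂nn hY₁nn hX₂int i12]
    refine setIntegral_congr_fun measurableSet_Ioi fun t _ => ?_
    simp [hF, hG, hsurvX t]
  have e6 : ∫ ω, min (X₂ ω) (Y₂ ω) = ∫ t in Ioi (0:ℝ), F t * G t := by
    rw [exp_min_eq' hX₂ hY₂ hX₂nn hY₂nn hX₂int i13]
    refine setIntegral_congr_fun measurableSet_Ioi fun t _ => ?_
    simp [hF, hG, hsurvX t, hsurvY t]
  -- integrability of the six minima
  have m1 := min_integrable' hX₁ hX₂ hX₁nn hX₂nn hXint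
  have m2 := min_integrable' hY₁ hY₂ hY₁nn hY₂nn hYint
  have m3 := min_integrable' hX₁ hY₁ hX₁nn hY₁nn hXint
  have m4 := min_integrable' hX₁ hY₂ hX₁nn hY₂nn hXint
  have m5 := min_integrable' hX₂ hY₁ hX₂nn hY₁nn hX₂int
  have m6 := min_integrable' hX₂ hY₂ hX₂nn hY₂nn hX₂int
  -- split the left-hand side
  have lhs_eq : (∫ ω, (1 / 4 : ℝ) *
        (4 * min (X₁ ω) (X₂ ω) + 4 * min (Y₁ ω) (Y₂ ω)
          - 2 * min (X₁ ω) (Y₁ ω) - 2 * min (X₁ ω) (Y₂ ω)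
          - 2 * min (X₂ ω) (Y₁ ω) - 2 * min (X₂ ω) (Y₂ ω)))
      = (∫ ω, min (X₁ ω) (X₂ ω)) + (∫ ω, min (Y₁ ω) (Y₂ ω))
        - (1/2) * (∫ ω, min (X₁ ω) (Y₁ ω)) - (1/2) * (∫ ω, min (X₁ ω) (Y₂ ω))
        - (1/2) * (∫ ω, min (X₂ ω) (Y₁ ω)) - (1/2) * (∫ ω, min (X₂ ω) (Y₂ ω)) := by
    have key : (fun ω => (1 / 4 : ℝ) *
        (4 * min (X₁ ω) (X₂ ω) + 4 * min (Y₁ ω) (Y₂ ω)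
          - 2 * min (X₁ ω) (Y₁ ω) - 2 * min (X₁ ω) (Y₂ ω)
          - 2 * min (X₂ ω) (Y₁ ω) - 2 * min (X₂ ω) (Y₂ ω)))
      = fun ω => (min (X₁ ω) (X₂ ω) + min (Y₁ ω) (Y₂ ω))
        - (((1/2) * min (X₁ ω) (Y₁ ω) + (1/2) * min (X₁ ω) (Y₂ ω))
          + ((1/2) * min (X₂ ω) (Y₁ ω) + (1/2) * min (X₂ ω) (Y₂ ω))) := by
      funext ω; ring
    have h3 : Integrable (fun ω => (1/2 : ℝ) * min (X₁ ω) (Y₁ ω)) ℙ := m3.const_mul _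
    have h4 : Integrable (fun ω => (1/2 : ℝ) * min (X₁ ω) (Y₂ ω)) ℙ := m4.const_mul _
    have h5 : Integrable (fun ω => (1/2 : ℝ) * min (X₂ ω) (Y₁ ω)) ℙ := m5.const_mul _
    have h6 : Integrable (fun ω => (1/2 : ℝ) * min (X₂ ω) (Y₂ ω)) ℙ := m6.const_mul _
    have hA : Integrable (fun ω => min (X₁ ω) (X₂ ω) + min (Y₁ ω) (Y₂ ω)) ℙ := m1.add m2
    have h34 : Integrable (fun ω => (1/2 : ℝ) * min (X₁ ω) (Y₁ ω)
        + (1/2 : ℝ) * min (X₁ ω) (Y₂ ω)) ℙ := h3.add h4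
    have h56 : Integrable (fun ω => (1/2 : ℝ) * min (X₂ ω) (Y₁ ω)
        + (1/2 : ℝ) * min (X₂ ω) (Y₂ ω)) ℙ := h5.add h6
    have hB : Integrable (fun ω => ((1/2 : ℝ) * min (X₁ ω) (Y₁ ω)
        + (1/2 : ℝ) * min (X₁ ω) (Y₂ ω)) + ((1/2 : ℝ) * min (X₂ ω) (Y₁ ω)
        + (1/2 : ℝ) * min (X₂ ω) (Y₂ ω))) ℙ := h34.add h56
    rw [key, integral_sub hA hB, integral_add m1 m2,
      integral_add h34 h56, integral_add h3 h4, integral_add h5 h6,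
      MeasureTheory.integral_const_mul, MeasureTheory.integral_const_mul, MeasureTheory.integral_const_mul, MeasureTheory.integral_const_mul]
    ring
  -- integrability of survival functions and their products
  have sF : IntegrableOn F (Ioi (0:ℝ)) := surv_integrable' hX₁nn hXint
  have sG : IntegrableOn G (Ioi (0:ℝ)) := surv_integrable' hY₁nn hYint
  have hFnn : ∀ t, 0 ≤ F t := fun t => ENNReal.toReal_nonneg
  have hGnn : ∀ t, 0 ≤ G t := fun t => ENNReal.toReal_nonneg
  have hFle : ∀ t, F t ≤ 1 := fun t => by
    simpa using ENNReal.toReal_mono ENNReal.one_ne_top (prob_le_one (μ := ℙ))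
  have hGle : ∀ t, G t ≤ 1 := fun t => by
    simpa using ENNReal.toReal_mono ENNReal.one_ne_top (prob_le_one (μ := ℙ))
  have prod_int : ∀ (H : ℝ → ℝ), (∀ t, 0 ≤ H t) → (∀ t, H t ≤ 1) → Measurable H →
      IntegrableOn (fun t => F t * H t) (Ioi (0:ℝ)) := by
    intro H hHnn hHle hHm
    refine sF.mono' (((surv_measurable' X₁).mul hHm).aestronglyMeasurable) ?_
    refine Filter.Eventually.of_forall fun t => ?_
    rw [Real.norm_eq_abs, abs_of_nonneg (mul_nonneg (hFnn t) (hHnn t))]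
    calc F t * H t ≤ F t * 1 := by
          exact mul_le_mul_of_nonneg_left (hHle t) (hFnn t)
      _ = F t := mul_one _
  have iFF : IntegrableOn (fun t => F t * F t) (Ioi (0:ℝ)) :=
    prod_int F hFnn hFle (surv_measurable' X₁)
  have iFG : IntegrableOn (fun t => F t * G t) (Ioi (0:ℝ)) :=
    prod_int G hGnn hGle (surv_measurable' Y₁)
  have iGG : IntegrableOn (fun t => G t * G t) (Ioi (0:ℝ)) := by
    refine sG.mono' (((surv_measurable' Y₁).mul (surv_measurable' Y₁)).aestronglyMeasurable) ?_
    refine Filter.Eventually.of_forall fun t => ?_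
    rw [Real.norm_eq_abs, abs_of_nonneg (mul_nonneg (hGnn t) (hGnn t))]
    calc G t * G t ≤ G t * 1 := mul_le_mul_of_nonneg_left (hGle t) (hGnn t)
      _ = G t := mul_one _
  -- split the right-hand side
  have rhs_eq : (∫ x in Ioi (0:ℝ), (F x - G x) ^ 2)
      = (∫ x in Ioi (0:ℝ), F x * F x) + (∫ x in Ioi (0:ℝ), G x * G x)
        - 2 * ∫ x in Ioi (0:ℝ), F x * G x := by
    have key : (fun x => (F x - G x) ^ 2)
        = fun x => (F x * F x + G x * G x) - 2 * (F x * G x) := by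
      funext x; ring
    have hC : IntegrableOn (fun x => F x * F x + G x * G x) (Ioi (0:ℝ)) := iFF.add iGG
    have hD : IntegrableOn (fun x => (2:ℝ) * (F x * G x)) (Ioi (0:ℝ)) := iFG.const_mul 2
    rw [key, integral_sub hC hD, integral_add iFF iGG, MeasureTheory.integral_const_mul]
  rw [lhs_eq, e1, e2, e3, e4, e5, e6, rhs_eq]
  ring
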